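/- Let α be a selfadjoint operator on H, c : E → H bounded, μ_x > 0, and for z ∈ ℂ₊ set B(z) = [I + (i/2) μ_x c*(α − zI)⁻¹ c][I − (i/2) μ_x c*(α − zI)⁻¹ c]⁻¹ on E. Then ‖B(z)‖ ≤ 1 for all z ∈ ℂ₊; i.e., B is an analytic contraction-valued function on the upper half-plane. -/

import Mathlib

open ContinuousLinearMap
open scoped InnerProductSpace

/-!
Write `A(z) = (iμ/2) c* (α - z)⁻¹ c`, so that `B(z) = (1 + A(z)) (1 - A(z))⁻¹` is the Cayley
transform of `A(z)`. Since `α` is selfadjoint, `Im ⟪(α - z)⁻¹ u, u⟫ = -Im z ‖(α - z)⁻¹ u‖²`, hence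
`Re ⟪A(z) y, y⟫ = -(μ/2) Im z ‖(α - z)⁻¹ c y‖² ≤ 0` on the upper half-plane: `A(z)` is dissipative.
For a dissipative `A`, `Re ⟪(1 - A) y, y⟫ ≥ ‖y‖²` makes `1 - A` invertible (Lax–Milgram), and
`‖(1 + A) y‖² - ‖(1 - A) y‖² = 4 Re ⟪A y, y⟫ ≤ 0` makes the Cayley transform a contraction.
Analyticity follows since the resolvent and operator inversion are analytic.
-/

section Dissipative

variable {E : Type*} [NormedAddCommGroup E] [InnerProductSpace ℂ E] {A : E →L[ℂ] E}

theorem norm_add_apply_le_norm_sub_apply (hA : ∀ y, (⟪A y, y⟫_ℂ).re ≤ 0) (y : E) :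
    ‖y + A y‖ ≤ ‖y - A y‖ := by
  have hy : (⟪y, A y⟫_ℂ).re ≤ 0 := by rw [← inner_conj_symm, Complex.conj_re]; exact hA y
  have hsq : ‖y + A y‖ ^ 2 ≤ ‖y - A y‖ ^ 2 := by
    rw [@norm_add_sq ℂ, @norm_sub_sq ℂ, RCLike.re_to_complex]
    linarith
  exact (pow_le_pow_iff_left₀ (norm_nonneg _) (norm_nonneg _) two_ne_zero).mp hsq

theorem isUnit_one_sub_of_re_inner_nonpos [CompleteSpace E] (hA : ∀ y, (⟪A y, y⟫_ℂ).re ≤ 0) :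
    IsUnit (1 - A) :=
  isUnit_of_forall_le_norm_inner_map _ (c := 1) one_pos fun y => calc
    ‖y‖ ^ 2 * (1 : NNReal) ≤ (⟪(1 - A) y, y⟫_ℂ).re := by
      rw [sub_apply, one_apply_eq_self, inner_sub_left, Complex.sub_re, ← RCLike.re_to_complex,
        inner_self_eq_norm_sq, NNReal.coe_one, mul_one]
      linarith [hA y]
    _ ≤ ‖⟪(1 - A) y, y⟫_ℂ‖ := Complex.re_le_norm _

theorem norm_one_add_mul_ring_inverse_one_sub_le_one [CompleteSpace E]
    (hA : ∀ y, (⟪A y, y⟫_ℂ).re ≤ 0) : ‖(1 + A) * Ring.inverse (1 - A)‖ ≤ 1 := by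
  refine opNorm_le_bound _ zero_le_one fun x => ?_
  set y := Ring.inverse (1 - A) x
  have hx : (1 - A) y = x := by
    rw [← mul_apply_eq_comp, Ring.mul_inverse_cancel _ (isUnit_one_sub_of_re_inner_nonpos hA),
      one_apply_eq_self]
  calc ‖((1 + A) * Ring.inverse (1 - A)) x‖ = ‖y + A y‖ := rfl
    _ ≤ ‖y - A y‖ := norm_add_apply_le_norm_sub_apply hA y
    _ = 1 * ‖x‖ := by rw [← hx, one_mul]; rfl

end Dissipative

theorem AnalyticAt.ringInverse {𝕜 E A : Type*} [NontriviallyNormedField 𝕜] [NormedAddCommGroup E]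
    [NormedSpace 𝕜 E] [NormedRing A] [NormedAlgebra 𝕜 A] [HasSummableGeomSeries A]
    {f : E → A} {z : E} (hf : AnalyticAt 𝕜 f z) (hz : IsUnit (f z)) :
    AnalyticAt 𝕜 (fun w => Ring.inverse (f w)) z :=
  (analyticAt_inverse (𝕜 := 𝕜) hz.unit).comp_of_eq hf hz.unit_spec.symm

section Resolvent

variable {H : Type*} [NormedAddCommGroup H] [InnerProductSpace ℂ H] [CompleteSpace H]
  {α : H →L[ℂ] H}

theorem IsSelfAdjoint.isUnit_sub_smul_one (hα : IsSelfAdjoint α) {z : ℂ}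
    (hz : z.im ≠ 0) : IsUnit (α - z • 1) := by
  have hres : z ∉ spectrum ℂ α := fun hmem => hz (hα.im_eq_zero_of_mem_spectrum hmem)
  rw [spectrum.notMem_iff, Algebra.algebraMap_eq_smul_one] at hres
  simpa using hres.neg

theorem IsSelfAdjoint.im_inner_ring_inverse_sub_smul_one_apply (hα : IsSelfAdjoint α) (z : ℂ)
    (u : H) : (⟪Ring.inverse (α - z • 1) u, u⟫_ℂ).im =
      -(z.im * ‖Ring.inverse (α - z • 1) u‖ ^ 2) := by
  by_cases hz : IsUnit (α - z • 1)
  swap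
  · -- `Ring.inverse` of a non-unit is `0`, so both sides vanish
    simp [Ring.inverse_non_unit _ hz]
  set v := Ring.inverse (α - z • 1) u
  have hv : (α - z • 1) v = u := by
    rw [← mul_apply_eq_comp, Ring.mul_inverse_cancel _ hz, one_apply_eq_self]
  have hαv : (⟪v, α v⟫_ℂ).im = 0 := hα.isSymmetric.im_inner_self_apply v
  rw [← hv, sub_apply, smul_apply, one_apply_eq_self, inner_sub_right, inner_smul_right,
    Complex.sub_im, hαv, inner_self_eq_norm_sq_to_K]
  simp [Complex.mul_im, ← Complex.ofReal_pow]

end Resolvent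

section PointMass

variable {E H : Type*} [NormedAddCommGroup E] [InnerProductSpace ℂ E] [CompleteSpace E]
  [NormedAddCommGroup H] [InnerProductSpace ℂ H] [CompleteSpace H]

noncomputable def pointMassTerm (α : H →L[ℂ] H) (c : E →L[ℂ] H) (μ : ℝ) (z : ℂ) : E →L[ℂ] E :=
  (((μ / 2 : ℝ) : ℂ) * Complex.I) • (adjoint c).comp ((Ring.inverse (α - z • 1)).comp c)

theorem re_inner_pointMassTerm_apply (α : H →L[ℂ] H) (c : E →L[ℂ] H) (μ : ℝ) (z : ℂ) (y : E) :
    (⟪pointMassTerm α c μ z y, y⟫_ℂ).re = μ / 2 * (⟪Ring.inverse (α - z • 1) (c y), c y⟫_ℂ).im := by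
  rw [pointMassTerm, smul_apply, inner_smul_left, comp_apply, comp_apply, adjoint_inner_left,
    map_mul, Complex.conj_ofReal, Complex.conj_I]
  simp [Complex.mul_re]

theorem re_inner_pointMassTerm_apply_nonpos {α : H →L[ℂ] H} (hα : IsSelfAdjoint α)
    (c : E →L[ℂ] H) {μ : ℝ} (hμ : 0 ≤ μ) {z : ℂ} (hz : 0 ≤ z.im) (y : E) :
    (⟪pointMassTerm α c μ z y, y⟫_ℂ).re ≤ 0 := by
  rw [re_inner_pointMassTerm_apply, hα.im_inner_ring_inverse_sub_smul_one_apply, mul_neg,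
    neg_nonpos]
  exact mul_nonneg (div_nonneg hμ zero_le_two) (mul_nonneg hz (sq_nonneg _))

theorem analyticAt_pointMassTerm {α : H →L[ℂ] H} (c : E →L[ℂ] H) (μ : ℝ) {z : ℂ}
    (hz : IsUnit (α - z • 1)) : AnalyticAt ℂ (pointMassTerm α c μ) z := by
  let sandwich : (H →L[ℂ] H) →L[ℂ] E →L[ℂ] E :=
    (((μ / 2 : ℝ) : ℂ) * Complex.I) • (compL ℂ E H E (adjoint c)).comp ((compL ℂ E H H).flip c)
  have hR : AnalyticAt ℂ (fun w : ℂ => Ring.inverse (α - w • 1)) z :=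
    (analyticAt_const.sub (analyticAt_id.smul analyticAt_const)).ringInverse hz
  exact sandwich.analyticAt _ |>.comp hR

end PointMass

/-- The Blaschke–Potapov-type factor
`B(z) = [I + (i/2)μ_x c*(α − z)⁻¹c][I − (i/2)μ_x c*(α − z)⁻¹c]⁻¹` is an analytic
contraction-valued function on the upper half-plane. -/
theorem stmt_16 {E H : Type*} [NormedAddCommGroup E] [InnerProductSpace ℂ E] [CompleteSpace E]
    [NormedAddCommGroup H] [InnerProductSpace ℂ H] [CompleteSpace H]
    (α : H →L[ℂ] H) (hα : IsSelfAdjoint α)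
    (c : E →L[ℂ] H) (μx : ℝ) (hμx : 0 < μx) :
    (∀ z : ℂ, 0 < z.im →
      ‖((1 : E →L[ℂ] E) + (((μx / 2 : ℝ) : ℂ) * Complex.I) •
          ((adjoint c).comp ((Ring.inverse (α - z • 1)).comp c))) *
        Ring.inverse ((1 : E →L[ℂ] E) - (((μx / 2 : ℝ) : ℂ) * Complex.I) •
          ((adjoint c).comp ((Ring.inverse (α - z • 1)).comp c)))‖ ≤ 1) ∧
    AnalyticOnNhd ℂ
      (fun z : ℂ =>
        ((1 : E →L[ℂ] E) + (((μx / 2 : ℝ) : ℂ) * Complex.I) •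
          ((adjoint c).comp ((Ring.inverse (α - z • 1)).comp c))) *
        Ring.inverse ((1 : E →L[ℂ] E) - (((μx / 2 : ℝ) : ℂ) * Complex.I) •
          ((adjoint c).comp ((Ring.inverse (α - z • 1)).comp c))))
      {z : ℂ | 0 < z.im} := by
  have hA (z : ℂ) (hz : 0 < z.im) (y : E) : (⟪pointMassTerm α c μx z y, y⟫_ℂ).re ≤ 0 :=
    re_inner_pointMassTerm_apply_nonpos hα c hμx.le hz.le y
  refine ⟨fun z hz => norm_one_add_mul_ring_inverse_one_sub_le_one (hA z hz), fun z hz => ?_⟩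
  have hS := analyticAt_pointMassTerm c μx (hα.isUnit_sub_smul_one (ne_of_gt hz))
  exact (analyticAt_const.add hS).mul
    ((analyticAt_const.sub hS).ringInverse (isUnit_one_sub_of_re_inner_nonpos (hA z hz)))
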